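/- Assume pairwise identifiability and define ρ := max over y≠y' of min_{s∈[0,1]} ∏_{m=1}^K M_m^{(y,y')}(s). Then ρ∈(0,1), and the uniform query plan r^unif(n)=(n,…,n) is surrogate-feasible (i.e. P̄_e(y;r^unif(n))≤α_y for all y∈𝒴) whenever n ≥ ⌈ log((L−1)·π_max / (π_min·α_min)) / (−log ρ) ⌉ =: n_unif. In particular OPT̄(α) ≤ n_unif · c_Σ, and every optimal surrogate design r* satisfies ∑_{m=1}^K r*_m ≤ n_unif · c_Σ / c_min (where c_Σ=∑_m c_m, c_min=min_m c_m, π_max=max_y π(y), π_min=min_y π(y)). -/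

import Mathlib

open Finset Set
open scoped Classical BigOperators ENNReal

namespace MultiLLM

noncomputable section

variable {L K : ℕ}

/-- The observation space for a query plan `r`: model `m` is queried `r m` times. -/
abbrev Obs (𝒳 : Fin K → Type) (r : Fin K → ℕ) := ∀ m : Fin K, Fin (r m) → 𝒳 m

variable {𝒳 : Fin K → Type} [∀ m, Fintype (𝒳 m)]

/-- Conditional likelihood of an observation vector given `Y = y`. -/
def prodLik (p : ∀ m : Fin K, 𝒳 m → Fin L → ℝ) (r : Fin K → ℕ) (y : Fin L)
    (x : Obs 𝒳 r) : ℝ :=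
  ∏ m, ∏ t, p m (x m t) y

/-- MAP score of label `y` at observation `x`. -/
def score (π : Fin L → ℝ) (p : ∀ m : Fin K, 𝒳 m → Fin L → ℝ) (r : Fin K → ℕ)
    (y : Fin L) (x : Obs 𝒳 r) : ℝ :=
  π y * prodLik p r y x

/-- Conditional probability of an event `E` given `Y = y`. -/
def condProb (p : ∀ m : Fin K, 𝒳 m → Fin L → ℝ) (r : Fin K → ℕ) (y : Fin L)
    (E : Set (Obs 𝒳 r)) : ℝ :=
  ∑ x : Obs 𝒳 r, E.indicator (prodLik p r y) x

/-- `Yhat` is a MAP estimator for plan `r`. -/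
def IsMAP (π : Fin L → ℝ) (p : ∀ m : Fin K, 𝒳 m → Fin L → ℝ) (r : Fin K → ℕ)
    (Yhat : Obs 𝒳 r → Fin L) : Prop :=
  ∀ x : Obs 𝒳 r, ∀ y : Fin L, score π p r y x ≤ score π p r (Yhat x) x

/-- Statewise error probability of estimator `Yhat` when the truth is `y`. -/
def Pe (p : ∀ m : Fin K, 𝒳 m → Fin L → ℝ) (r : Fin K → ℕ) (y : Fin L)
    (Yhat : Obs 𝒳 r → Fin L) : ℝ :=
  condProb p r y {x | Yhat x ≠ y}

/-- Log-likelihood difference between competing label `y'` and true label `y`. -/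
def LLdiff (π : Fin L → ℝ) (p : ∀ m : Fin K, 𝒳 m → Fin L → ℝ) (r : Fin K → ℕ)
    (y y' : Fin L) (x : Obs 𝒳 r) : ℝ :=
  Real.log (π y' / π y) + ∑ m, ∑ t, Real.log (p m (x m t) y' / p m (x m t) y)

/-- Chernoff affinity factor `M_m^{(y,y')}(s)`. -/
def chernoffM (p : ∀ m : Fin K, 𝒳 m → Fin L → ℝ) (m : Fin K) (y y' : Fin L)
    (s : ℝ) : ℝ :=
  ∑ x : 𝒳 m, p m x y ^ (1 - s) * p m x y' ^ s

/-- Pairwise Chernoff proxy `P̄_{y,y'}(r; s)`. -/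
def proxy (π : Fin L → ℝ) (p : ∀ m : Fin K, 𝒳 m → Fin L → ℝ) (r : Fin K → ℕ)
    (y y' : Fin L) (s : ℝ) : ℝ :=
  (π y' / π y) ^ s * ∏ m, chernoffM p m y y' s ^ r m

/-- Optimized pairwise Chernoff proxy `P̄_{y,y'}(r) = min_{s ∈ [0,1]} P̄_{y,y'}(r; s)`. -/
def proxyOpt (π : Fin L → ℝ) (p : ∀ m : Fin K, 𝒳 m → Fin L → ℝ) (r : Fin K → ℕ)
    (y y' : Fin L) : ℝ :=
  sInf ((fun s => proxy π p r y y' s) '' Set.Icc (0 : ℝ) 1)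

/-- Surrogate statewise error bound `P̄_e(y; r)`. -/
def PeBar (π : Fin L → ℝ) (p : ∀ m : Fin K, 𝒳 m → Fin L → ℝ) (r : Fin K → ℕ)
    (y : Fin L) : ℝ :=
  ∑ y' ∈ Finset.univ.filter (fun y' => y' ≠ y), proxyOpt π p r y y'

/-- Total cost of a query plan. -/
def cost (c : Fin K → ℝ) (r : Fin K → ℕ) : ℝ := ∑ m, c m * (r m : ℝ)

/-- Effective sample size `n_{y,y'}(r)`: total queries to models distinguishing `y,y'`. -/
def effSample (p : ∀ m : Fin K, 𝒳 m → Fin L → ℝ) (r : Fin K → ℕ) (y y' : Fin L) : ℕ :=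
  ∑ m ∈ Finset.univ.filter (fun m => (fun x => p m x y) ≠ (fun x => p m x y')), r m

/-- Tilted per-symbol distribution `q_m^{(y,y')}(x; s)`. -/
def qTilt (p : ∀ m : Fin K, 𝒳 m → Fin L → ℝ) (m : Fin K) (y y' : Fin L) (s : ℝ)
    (x : 𝒳 m) : ℝ :=
  p m x y ^ (1 - s) * p m x y' ^ s / chernoffM p m y y' s

/-- Weight of an observation under the tilted product measure `ℚ_{y,y',r,s}`. -/
def Qweight (p : ∀ m : Fin K, 𝒳 m → Fin L → ℝ) (r : Fin K → ℕ) (y y' : Fin L)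
    (s : ℝ) (x : Obs 𝒳 r) : ℝ :=
  ∏ m, ∏ t, qTilt p m y y' s (x m t)

/-- Expectation under the tilted product measure `ℚ_{y,y',r,s}`. -/
def Qexp (p : ∀ m : Fin K, 𝒳 m → Fin L → ℝ) (r : Fin K → ℕ) (y y' : Fin L)
    (s : ℝ) (f : Obs 𝒳 r → ℝ) : ℝ :=
  ∑ x : Obs 𝒳 r, Qweight p r y y' s x * f x

/-- Probability of an event under the tilted product measure `ℚ_{y,y',r,s}`. -/
def Qprob (p : ∀ m : Fin K, 𝒳 m → Fin L → ℝ) (r : Fin K → ℕ) (y y' : Fin L)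
    (s : ℝ) (E : Set (Obs 𝒳 r)) : ℝ :=
  ∑ x : Obs 𝒳 r, E.indicator (Qweight p r y y' s) x

/-- Variance under the tilted product measure `ℚ_{y,y',r,s}`. -/
def Qvar (p : ∀ m : Fin K, 𝒳 m → Fin L → ℝ) (r : Fin K → ℕ) (y y' : Fin L)
    (s : ℝ) (f : Obs 𝒳 r → ℝ) : ℝ :=
  Qexp p r y y' s (fun x => (f x - Qexp p r y y' s f) ^ 2)

/-- True feasible set `ℛ(α)` (with MAP estimator family `Yhat`). -/
def RtrueSet (p : ∀ m : Fin K, 𝒳 m → Fin L → ℝ)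
    (Yhat : ∀ r : Fin K → ℕ, Obs 𝒳 r → Fin L) (α : Fin L → ℝ) : Set (Fin K → ℕ) :=
  {r | ∀ y, Pe p r y (Yhat r) ≤ α y}

/-- Surrogate feasible set `ℛ̄(α)`. -/
def RbarSet (π : Fin L → ℝ) (p : ∀ m : Fin K, 𝒳 m → Fin L → ℝ)
    (α : Fin L → ℝ) : Set (Fin K → ℕ) :=
  {r | ∀ y, PeBar π p r y ≤ α y}

/-- True optimal cost `OPT(α)` (with `+∞` for the empty feasible set). -/
def OPTtrue (p : ∀ m : Fin K, 𝒳 m → Fin L → ℝ)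
    (Yhat : ∀ r : Fin K → ℕ, Obs 𝒳 r → Fin L) (c : Fin K → ℝ) (α : Fin L → ℝ) : ℝ≥0∞ :=
  ⨅ r ∈ RtrueSet p Yhat α, ENNReal.ofReal (cost c r)

/-- Surrogate optimal cost `OPT̄(α)` (with `+∞` for the empty feasible set). -/
def OPTbar (π : Fin L → ℝ) (p : ∀ m : Fin K, 𝒳 m → Fin L → ℝ)
    (c : Fin K → ℝ) (α : Fin L → ℝ) : ℝ≥0∞ :=
  ⨅ r ∈ RbarSet π p α, ENNReal.ofReal (cost c r)

/-!
For `s ∈ [0,1]` the weighted AM–GM inequality `a^{1-s} b^s ≤ (1-s) a + s b` gives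
`M_m^{(y,y')}(s) ≤ 1`, strictly at `s = 1/2` for a model that separates `y` and `y'`; by
compactness of `[0,1]` each pairwise minimum is attained, so `ρ`, a maximum of finitely many
of them, lies in `(0,1)`. For the uniform plan `(n,…,n)`, evaluating the proxy at the
minimizing `s` bounds `P̄_{y,y'}` by `(π_max/π_min) ρ^n`, hence `P̄_e(y)` by
`(L-1)(π_max/π_min) ρ^n`, which is at most `α_min` as soon as `n ≥ n_unif`. The cost bounds
follow by comparing any optimal design with the feasible uniform plan.
-/

theorem rpow_le_max_one {a s : ℝ} (ha : 0 ≤ a) (hs : s ∈ Icc (0 : ℝ) 1) :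
    a ^ s ≤ max 1 a := by
  rcases le_total a 1 with h | h
  · exact (Real.rpow_le_one ha h hs.1).trans (le_max_left _ _)
  · exact (Real.rpow_le_self_of_one_le h hs.2).trans (le_max_right _ _)

theorem pow_le_inv_of_ceil_log_div_le {ρ B : ℝ} {n : ℕ} (hρ0 : 0 < ρ) (hρ1 : ρ < 1)
    (hB : 0 < B) (hn : ⌈Real.log B / -Real.log ρ⌉₊ ≤ n) : ρ ^ n ≤ B⁻¹ := by
  have hlogρ : 0 < -Real.log ρ := neg_pos.mpr (Real.log_neg hρ0 hρ1)
  have hlogB : Real.log B ≤ n * -Real.log ρ := (div_le_iff₀ hlogρ).mp (Nat.ceil_le.mp hn)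
  rw [← Real.log_le_log_iff (pow_pos hρ0 n) (inv_pos.mpr hB), Real.log_pow, Real.log_inv]
  linarith

section OffDiagonal

variable {α : Type*} [Finite α] (f : α → α → ℝ)

theorem finite_offDiag_values : {v : ℝ | ∃ a b, a ≠ b ∧ v = f a b}.Finite :=
  (Set.finite_range (Function.uncurry f)).subset <| by
    rintro v ⟨a, b, -, rfl⟩
    exact ⟨(a, b), rfl⟩

theorem le_sSup_offDiag_values {a b : α} (hab : a ≠ b) :
    f a b ≤ sSup {v : ℝ | ∃ a b, a ≠ b ∧ v = f a b} :=
  le_csSup (finite_offDiag_values f).bddAbove ⟨a, b, hab, rfl⟩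

theorem exists_sSup_offDiag_values_eq [Nontrivial α] :
    ∃ a b, a ≠ b ∧ sSup {v : ℝ | ∃ a b, a ≠ b ∧ v = f a b} = f a b := by
  obtain ⟨a, b, hab⟩ := exists_pair_ne α
  have hne : {v : ℝ | ∃ a b, a ≠ b ∧ v = f a b}.Nonempty := ⟨f a b, a, b, hab, rfl⟩
  exact hne.csSup_mem (finite_offDiag_values f)

end OffDiagonal

section Chernoff

variable (p : ∀ m : Fin K, 𝒳 m → Fin L → ℝ) (y y' : Fin L)

theorem continuous_chernoffM (m : Fin K) (hy : ∀ x, 0 < p m x y) (hy' : ∀ x, 0 < p m x y') :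
    Continuous (chernoffM p m y y') := by
  unfold chernoffM
  fun_prop (disch := grind)

theorem chernoffM_pos (m : Fin K) [Nonempty (𝒳 m)] (hy : ∀ x, 0 < p m x y)
    (hy' : ∀ x, 0 < p m x y') (s : ℝ) : 0 < chernoffM p m y y' s :=
  Finset.sum_pos (fun x _ => by have := hy x; have := hy' x; positivity) Finset.univ_nonempty

theorem chernoffM_le_one (m : Fin K) (hy : ∀ x, 0 ≤ p m x y) (hy' : ∀ x, 0 ≤ p m x y')
    (h1 : ∑ x, p m x y = 1) (h1' : ∑ x, p m x y' = 1) {s : ℝ} (hs : s ∈ Icc (0 : ℝ) 1) :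
    chernoffM p m y y' s ≤ 1 :=
  calc chernoffM p m y y' s ≤ ∑ x, ((1 - s) * p m x y + s * p m x y') :=
        Finset.sum_le_sum fun x _ => Real.geom_mean_le_arith_mean2_weighted
          (sub_nonneg.mpr hs.2) hs.1 (hy x) (hy' x) (sub_add_cancel 1 s)
    _ = 1 := by rw [Finset.sum_add_distrib, ← Finset.mul_sum, ← Finset.mul_sum, h1, h1']; ring

theorem chernoffM_lt_one (m : Fin K) (hy : ∀ x, 0 ≤ p m x y) (hy' : ∀ x, 0 ≤ p m x y')
    (h1 : ∑ x, p m x y = 1) (h1' : ∑ x, p m x y' = 1)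
    (hne : (fun x => p m x y) ≠ (fun x => p m x y')) {s : ℝ} (hs : s ∈ Ioo (0 : ℝ) 1) :
    chernoffM p m y y' s < 1 := by
  obtain ⟨x₀, hx₀⟩ := Function.ne_iff.mp hne
  calc chernoffM p m y y' s < ∑ x, ((1 - s) * p m x y + s * p m x y') := by
        refine Finset.sum_lt_sum (fun x _ => Real.geom_mean_le_arith_mean2_weighted
          (sub_nonneg.mpr hs.2.le) hs.1.le (hy x) (hy' x) (sub_add_cancel 1 s))
          ⟨x₀, Finset.mem_univ _, ?_⟩
        exact (Real.geom_mean_lt_arith_mean2_weighted_iff_of_pos (sub_pos.mpr hs.2) hs.1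
          (hy x₀) (hy' x₀) (sub_add_cancel 1 s)).mpr hx₀
    _ = 1 := by rw [Finset.sum_add_distrib, ← Finset.mul_sum, ← Finset.mul_sum, h1, h1']; ring

def chernoffCoeff : ℝ :=
  sInf ((fun s => ∏ m, chernoffM p m y y' s) '' Icc (0 : ℝ) 1)

variable {p}

theorem chernoffCoeff_le (hp : ∀ m x z, 0 ≤ p m x z) {s : ℝ} (hs : s ∈ Icc (0 : ℝ) 1) :
    chernoffCoeff p y y' ≤ ∏ m, chernoffM p m y y' s := by
  refine csInf_le ⟨0, ?_⟩ ⟨s, hs, rfl⟩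
  rintro v ⟨t, -, rfl⟩
  exact Finset.prod_nonneg fun m _ => Finset.sum_nonneg fun x _ => by
    have := hp m x y; have := hp m x y'; positivity

theorem exists_chernoffCoeff_eq (hp : ∀ m x z, 0 < p m x z) :
    ∃ s ∈ Icc (0 : ℝ) 1, ∏ m, chernoffM p m y y' s = chernoffCoeff p y y' :=
  (isCompact_Icc.image (continuous_finsetProd _ fun m _ =>
    continuous_chernoffM p y y' m (hp m · y) (hp m · y'))).sInf_mem
    ((Set.nonempty_Icc.mpr zero_le_one).image _)

theorem chernoffCoeff_pos [∀ m, Nonempty (𝒳 m)] (hp : ∀ m x z, 0 < p m x z) :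
    0 < chernoffCoeff p y y' := by
  obtain ⟨s, -, hs⟩ := exists_chernoffCoeff_eq y y' hp
  exact hs ▸ Finset.prod_pos fun m _ => chernoffM_pos p y y' m (hp m · y) (hp m · y') s

theorem chernoffCoeff_lt_one [∀ m, Nonempty (𝒳 m)] (hp : ∀ m x z, 0 < p m x z)
    (hp1 : ∀ m z, ∑ x, p m x z = 1) {m₀ : Fin K}
    (hm₀ : (fun x => p m₀ x y) ≠ (fun x => p m₀ x y')) :
    chernoffCoeff p y y' < 1 := by
  have hhalf : (1 / 2 : ℝ) ∈ Ioo (0 : ℝ) 1 := by norm_num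
  calc chernoffCoeff p y y' ≤ ∏ m, chernoffM p m y y' (1 / 2) :=
        chernoffCoeff_le y y' (fun m x z => (hp m x z).le) (Ioo_subset_Icc_self hhalf)
    _ < ∏ _m : Fin K, (1 : ℝ) :=
        Finset.prod_lt_prod (fun m _ => chernoffM_pos p y y' m (hp m · y) (hp m · y') _)
          (fun m _ => chernoffM_le_one p y y' m (hp m · y |>.le) (hp m · y' |>.le)
            (hp1 m y) (hp1 m y') (Ioo_subset_Icc_self hhalf))
          ⟨m₀, Finset.mem_univ _, chernoffM_lt_one p y y' m₀ (hp m₀ · y |>.le)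
            (hp m₀ · y' |>.le) (hp1 m₀ y) (hp1 m₀ y') hm₀ hhalf⟩
    _ = 1 := Finset.prod_const_one

end Chernoff

section Design

variable {π : Fin L → ℝ} {p : ∀ m : Fin K, 𝒳 m → Fin L → ℝ}

theorem proxyOpt_const_le (hπ : ∀ y, 0 < π y) (hp : ∀ m x z, 0 < p m x z) (n : ℕ)
    (y y' : Fin L) :
    proxyOpt π p (fun _ => n) y y' ≤ max 1 (π y' / π y) * chernoffCoeff p y y' ^ n := by
  obtain ⟨s, hs, hmin⟩ := exists_chernoffCoeff_eq y y' hp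
  have hM : ∀ t, 0 ≤ ∏ m, chernoffM p m y y' t := fun t => Finset.prod_nonneg fun m _ =>
    Finset.sum_nonneg fun x _ => by have := hp m x y; have := hp m x y'; positivity
  have hratio : 0 < π y' / π y := div_pos (hπ y') (hπ y)
  calc proxyOpt π p (fun _ => n) y y' ≤ proxy π p (fun _ => n) y y' s := by
        refine csInf_le ⟨0, ?_⟩ ⟨s, hs, rfl⟩
        rintro v ⟨t, -, rfl⟩
        dsimp only
        rw [proxy, Finset.prod_pow]
        exact mul_nonneg (by positivity) (pow_nonneg (hM t) n)
    _ = (π y' / π y) ^ s * (∏ m, chernoffM p m y y' s) ^ n := by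
        rw [proxy, Finset.prod_pow]
    _ ≤ max 1 (π y' / π y) * chernoffCoeff p y y' ^ n := by
        rw [hmin]
        exact mul_le_mul_of_nonneg_right (rpow_le_max_one hratio.le hs)
          (hmin ▸ pow_nonneg (hM s) n)

theorem PeBar_le_of_proxyOpt_le {r : Fin K → ℕ} {y : Fin L} {b : ℝ}
    (hb : ∀ y', y' ≠ y → proxyOpt π p r y y' ≤ b) :
    PeBar π p r y ≤ ((L : ℝ) - 1) * b := by
  have hcard : ((univ.filter fun y' => y' ≠ y).card : ℝ) = (L : ℝ) - 1 := by
    rw [Finset.filter_ne', Finset.card_erase_of_mem (Finset.mem_univ y), Finset.card_univ,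
      Fintype.card_fin, Nat.cast_sub (Nat.one_le_of_lt y.pos), Nat.cast_one]
  rw [← hcard, ← nsmul_eq_mul]
  exact Finset.sum_le_card_nsmul _ _ _ fun y' hy' => hb y' (Finset.mem_filter.mp hy').2

theorem const_mem_RbarSet [∀ m, Nonempty (𝒳 m)] (hL : 2 ≤ L) (hπ : ∀ y, 0 < π y)
    (hp : ∀ m x z, 0 < p m x z) {πmax πmin : ℝ} (hπmax : ∀ y, π y ≤ πmax)
    (hπmin : IsLeast (Set.range π) πmin) {α : Fin L → ℝ} {amin : ℝ}
    (hamin : IsLeast (Set.range α) amin) (hamin_pos : 0 < amin) {ρ : ℝ} (hρ0 : 0 < ρ)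
    (hρ1 : ρ < 1) (hρ : ∀ y y', y ≠ y' → chernoffCoeff p y y' ≤ ρ) {n : ℕ}
    (hn : ⌈Real.log (((L : ℝ) - 1) * πmax / (πmin * amin)) / -Real.log ρ⌉₊ ≤ n) :
    (fun _ => n) ∈ RbarSet π p α := by
  obtain ⟨ymin, rfl⟩ := hπmin.1
  have hπmin_pos := hπ ymin
  have hπmax_pos := hπmin_pos.trans_le (hπmax ymin)
  have hL1 : (0 : ℝ) < (L : ℝ) - 1 := by
    have : (2 : ℝ) ≤ L := by exact_mod_cast hL
    linarith
  have hB : 0 < ((L : ℝ) - 1) * πmax / (π ymin * amin) :=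
    div_pos (mul_pos hL1 hπmax_pos) (mul_pos hπmin_pos hamin_pos)
  have hρn := pow_le_inv_of_ceil_log_div_le hρ0 hρ1 hB hn
  have hratio : ∀ y y', max 1 (π y' / π y) ≤ πmax / π ymin := fun y y' =>
    max_le ((one_le_div hπmin_pos).mpr (hπmax ymin))
      (div_le_div₀ ((hπ y').le.trans (hπmax y')) (hπmax y') hπmin_pos (hπmin.2 ⟨y, rfl⟩))
  intro y
  calc PeBar π p (fun _ => n) y ≤ ((L : ℝ) - 1) * (πmax / π ymin * ρ ^ n) := by
        refine PeBar_le_of_proxyOpt_le fun y' hy' => (proxyOpt_const_le hπ hp n y y').trans ?_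
        have hcoeff := (chernoffCoeff_pos y y' hp).le
        exact mul_le_mul (hratio y y') (pow_le_pow_left₀ hcoeff (hρ y y' hy'.symm) n)
          (pow_nonneg hcoeff n) (by positivity)
    _ ≤ ((L : ℝ) - 1) * (πmax / π ymin * (((L : ℝ) - 1) * πmax / (π ymin * amin))⁻¹) :=
        by gcongr
    _ = amin := by field_simp
    _ ≤ α y := hamin.2 ⟨y, rfl⟩

theorem cost_const (c : Fin K → ℝ) (n : ℕ) : cost c (fun _ => n) = n * ∑ m, c m := by
  rw [cost, Finset.mul_sum]
  simp_rw [mul_comm]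

theorem OPTbar_le_cost {α : Fin L → ℝ} {r : Fin K → ℕ} (c : Fin K → ℝ)
    (hr : r ∈ RbarSet π p α) :
    OPTbar π p c α ≤ ENNReal.ofReal (cost c r) :=
  iInf₂_le r hr

end Design

theorem mul_sum_le_cost {c : Fin K → ℝ} {cmin : ℝ} (hcmin : ∀ m, cmin ≤ c m)
    (r : Fin K → ℕ) :
    cmin * ∑ m, (r m : ℝ) ≤ cost c r := by
  rw [cost, Finset.mul_sum]
  gcongr with m
  exact hcmin m

theorem crude_feasible_design_general
    (hL : 2 ≤ L)
    (π : Fin L → ℝ) (p : ∀ m : Fin K, 𝒳 m → Fin L → ℝ)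
    (hπ : ∀ y, 0 < π y)
    (hp : ∀ (m : Fin K) (x : 𝒳 m) (y : Fin L), 0 < p m x y)
    (hp1 : ∀ (m : Fin K) (y : Fin L), ∑ x : 𝒳 m, p m x y = 1)
    (hident : ∀ y y' : Fin L, y ≠ y' → ∃ m, (fun x => p m x y) ≠ (fun x => p m x y'))
    (c : Fin K → ℝ) (hc : ∀ m, 0 < c m)
    (cmin : ℝ) (hcmin : IsLeast (Set.range c) cmin)
    (πmax : ℝ) (hπmax : IsGreatest (Set.range π) πmax)
    (πmin : ℝ) (hπmin : IsLeast (Set.range π) πmin)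
    (α : Fin L → ℝ) (hα : ∀ y, α y ∈ Set.Ioo (0 : ℝ) 1)
    (amin : ℝ) (hamin : IsLeast (Set.range α) amin)
    (ρ : ℝ)
    (hρ : ρ = sSup {v : ℝ | ∃ y y' : Fin L, y ≠ y' ∧
      v = sInf ((fun s => ∏ m, chernoffM p m y y' s) '' Set.Icc (0 : ℝ) 1)})
    (nunif : ℕ)
    (hnunif : nunif =
      ⌈Real.log (((L : ℝ) - 1) * πmax / (πmin * amin)) / (-Real.log ρ)⌉₊) :
    0 < ρ ∧ ρ < 1 ∧
    (∀ n : ℕ, nunif ≤ n → (fun _ => n) ∈ RbarSet π p α) ∧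
    OPTbar π p c α ≤ ENNReal.ofReal ((nunif : ℝ) * ∑ m, c m) ∧
    ∀ rstar ∈ RbarSet π p α,
      (∀ r' ∈ RbarSet π p α, cost c rstar ≤ cost c r') →
      (∑ m, (rstar m : ℝ)) ≤ (nunif : ℝ) * (∑ m, c m) / cmin := by
  have : Nontrivial (Fin L) := Fin.nontrivial_iff_two_le.mpr hL
  have : ∀ m, Nonempty (𝒳 m) := fun m => Finset.univ_nonempty_iff.mp
    (Finset.nonempty_of_sum_ne_zero ((hp1 m ⟨0, by omega⟩).trans_ne one_ne_zero))
  have hρ_ge : ∀ y y', y ≠ y' → chernoffCoeff p y y' ≤ ρ := fun y y' h =>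
    hρ ▸ le_sSup_offDiag_values (chernoffCoeff p) h
  obtain ⟨y₀, y₀', hy₀, hρ_eq⟩ := exists_sSup_offDiag_values_eq (chernoffCoeff p)
  obtain ⟨m₀, hm₀⟩ := hident y₀ y₀' hy₀
  have hρ0 : 0 < ρ := hρ ▸ hρ_eq ▸ chernoffCoeff_pos y₀ y₀' hp
  have hρ1 : ρ < 1 := hρ ▸ hρ_eq ▸ chernoffCoeff_lt_one y₀ y₀' hp hp1 hm₀
  obtain ⟨ya, rfl⟩ := hamin.1
  have hfeas : ∀ n, nunif ≤ n → (fun _ => n) ∈ RbarSet π p α := fun n hn =>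
    const_mem_RbarSet hL hπ hp (fun y => hπmax.2 ⟨y, rfl⟩) hπmin hamin (hα ya).1 hρ0 hρ1
      hρ_ge (hnunif ▸ hn)
  have hcost := cost_const c nunif
  have hunif := hfeas nunif le_rfl
  refine ⟨hρ0, hρ1, hfeas, hcost ▸ OPTbar_le_cost c hunif, fun rstar _ hopt => ?_⟩
  obtain ⟨mc, rfl⟩ := hcmin.1
  rw [le_div_iff₀ (hc mc), mul_comm]
  calc c mc * ∑ m, (rstar m : ℝ)
      ≤ cost c rstar := mul_sum_le_cost (fun m => hcmin.2 ⟨m, rfl⟩) rstar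
    _ ≤ nunif * ∑ m, c m := hcost ▸ hopt _ hunif

/-- Crude feasible design and query-count bound.
With `ρ = max_{y≠y'} min_{s∈[0,1]} ∏_m M_m^{(y,y')}(s)` one has `ρ ∈ (0,1)`;
the uniform plan `(n,…,n)` is surrogate-feasible for every `n ≥ n_unif`, so
`OPT̄(α) ≤ n_unif · c_Σ`, and every optimal surrogate design `r*` satisfies
`∑_m r*_m ≤ n_unif · c_Σ / c_min`. -/
theorem crude_feasible_design
    (hL : 2 ≤ L)
    (π : Fin L → ℝ) (p : ∀ m : Fin K, 𝒳 m → Fin L → ℝ)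
    (hπ : ∀ y, 0 < π y) (hπ1 : ∑ y, π y = 1)
    (hp : ∀ (m : Fin K) (x : 𝒳 m) (y : Fin L), 0 < p m x y)
    (hp1 : ∀ (m : Fin K) (y : Fin L), ∑ x : 𝒳 m, p m x y = 1)
    (hident : ∀ y y' : Fin L, y ≠ y' → ∃ m, (fun x => p m x y) ≠ (fun x => p m x y'))
    (c : Fin K → ℝ) (hc : ∀ m, 0 < c m)
    (cmin : ℝ) (hcmin : IsLeast (Set.range c) cmin)
    (πmax : ℝ) (hπmax : IsGreatest (Set.range π) πmax)
    (πmin : ℝ) (hπmin : IsLeast (Set.range π) πmin)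
    (α : Fin L → ℝ) (hα : ∀ y, α y ∈ Set.Ioo (0 : ℝ) 1)
    (amin : ℝ) (hamin : IsLeast (Set.range α) amin)
    (ρ : ℝ)
    (hρ : ρ = sSup {v : ℝ | ∃ y y' : Fin L, y ≠ y' ∧
      v = sInf ((fun s => ∏ m, chernoffM p m y y' s) '' Set.Icc (0 : ℝ) 1)})
    (nunif : ℕ)
    (hnunif : nunif =
      ⌈Real.log (((L : ℝ) - 1) * πmax / (πmin * amin)) / (-Real.log ρ)⌉₊) :
    0 < ρ ∧ ρ < 1 ∧
    (∀ n : ℕ, nunif ≤ n → (fun _ => n) ∈ RbarSet π p α) ∧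
    OPTbar π p c α ≤ ENNReal.ofReal ((nunif : ℝ) * ∑ m, c m) ∧
    ∀ rstar ∈ RbarSet π p α,
      (∀ r' ∈ RbarSet π p α, cost c rstar ≤ cost c r') →
      (∑ m, (rstar m : ℝ)) ≤ (nunif : ℝ) * (∑ m, c m) / cmin :=
  crude_feasible_design_general hL π p hπ hp hp1 hident c hc cmin hcmin πmax hπmax πmin hπmin α hα
    amin hamin ρ hρ nunif hnunif

end

end MultiLLM
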